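/- arXiv:2309.11702 — 2 statements merged into one kernel-verified Lean document; each statement's English description precedes it below -/
import Mathlib

section
/- Let V be a d×d positive definite real matrix, let X_1, …, X_n ∈ ℝ^d, and define V_t = V + Σ_{s=1}^t X_s X_sᵀ for t = 0, 1, …, n. Then Σ_{t=1}^n min{1, X_tᵀ V_{t-1}⁻¹ X_t} ≤ 2·(log det(V_n) − log det(V)). -/
/-!
Adding `x xᵀ` to a positive definite `A` multiplies its determinant by `1 + xᵀ A⁻¹ x`
(matrix determinant lemma), so `log det Vₙ - log det V` telescopes into
`∑ₜ log (1 + Xₜᵀ Vₜ⁻¹ Xₜ)`. Termwise, `min 1 u ≤ 2 log (1 + u)` for `u ≥ 0`.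
-/

open Matrix

theorem Real.min_one_le_two_mul_log_one_add {u : ℝ} (hu : 0 ≤ u) :
    min 1 u ≤ 2 * Real.log (1 + u) := by
  rcases le_total u 1 with hu1 | hu1
  · have hlog : 1 - (1 + u)⁻¹ ≤ Real.log (1 + u) := Real.one_sub_inv_le_log_of_pos (by linarith)
    have hhalf : u / 2 ≤ 1 - (1 + u)⁻¹ := by
      rw [inv_eq_one_div, sub_div' (by linarith), div_le_div_iff₀ two_pos (by linarith)]
      nlinarith
    rw [min_eq_right hu1]
    linarith
  · have hlog : Real.log 2 ≤ Real.log (1 + u) := Real.log_le_log two_pos (by linarith)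
    rw [min_eq_left hu1]
    linarith [Real.log_two_gt_d9]

namespace Matrix

variable {ι : Type*} [Fintype ι]

theorem PosDef.add_sum_vecMulVec_self {α : Type*} {V : Matrix ι ι ℝ} (hV : V.PosDef)
    (s : Finset α) (x : α → ι → ℝ) : (V + ∑ i ∈ s, vecMulVec (x i) (x i)).PosDef :=
  hV.add_posSemidef <| posSemidef_sum s fun i _ => by
    simpa using posSemidef_vecMulVec_self_star (x i)

variable [DecidableEq ι]

theorem det_add_vecMulVec {R : Type*} [CommRing R] {A : Matrix ι ι R} (hA : IsUnit A.det)
    (u v : ι → R) : (A + vecMulVec u v).det = A.det * (1 + v ⬝ᵥ (A⁻¹ *ᵥ u)) := by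
  rw [vecMulVec_eq Unit, det_add_replicateCol_mul_replicateRow hA, Matrix.mul_assoc,
    ← replicateCol_mulVec, replicateRow_mul_replicateCol]
  simp

theorem PosDef.dotProduct_inv_mulVec_self_nonneg {A : Matrix ι ι ℝ} (hA : A.PosDef)
    (x : ι → ℝ) : 0 ≤ x ⬝ᵥ (A⁻¹ *ᵥ x) := by
  simpa using hA.inv.posSemidef.dotProduct_mulVec_nonneg x

theorem PosDef.log_det_add_vecMulVec_self {A : Matrix ι ι ℝ} (hA : A.PosDef) (x : ι → ℝ) :
    Real.log (A + vecMulVec x x).det = Real.log A.det + Real.log (1 + x ⬝ᵥ (A⁻¹ *ᵥ x)) := by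
  have hquad := hA.dotProduct_inv_mulVec_self_nonneg x
  rw [det_add_vecMulVec hA.det_pos.ne'.isUnit, Real.log_mul hA.det_pos.ne' (by positivity)]

end Matrix

/-- Elliptical potential lemma:
`∑ₜ min {1, Xₜᵀ Vₜ₋₁⁻¹ Xₜ} ≤ 2 (log det Vₙ − log det V)`, where
`Vₜ = V + ∑_{s<t} X_s X_sᵀ` (vectors indexed from `0`). -/
theorem sum_min_quadratic_le_two_log_det {d : ℕ} (V : Matrix (Fin d) (Fin d) ℝ)
    (hV : V.PosDef) (n : ℕ) (X : ℕ → (Fin d → ℝ))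
    (W : ℕ → Matrix (Fin d) (Fin d) ℝ)
    (hW : ∀ t, W t = V + ∑ s ∈ Finset.range t, vecMulVec (X s) (X s)) :
    ∑ t ∈ Finset.range n, min 1 (X t ⬝ᵥ ((W t)⁻¹ *ᵥ X t)) ≤
      2 * (Real.log (W n).det - Real.log V.det) := by
  have hWpd (t : ℕ) : (W t).PosDef := hW t ▸ hV.add_sum_vecMulVec_self _ X
  have hstep (t : ℕ) : Real.log (W (t + 1)).det - Real.log (W t).det =
      Real.log (1 + X t ⬝ᵥ ((W t)⁻¹ *ᵥ X t)) := by
    rw [hW (t + 1), Finset.sum_range_succ, ← add_assoc, ← hW t,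
      (hWpd t).log_det_add_vecMulVec_self, add_sub_cancel_left]
  calc ∑ t ∈ Finset.range n, min 1 (X t ⬝ᵥ ((W t)⁻¹ *ᵥ X t))
      ≤ ∑ t ∈ Finset.range n, 2 * (Real.log (W (t + 1)).det - Real.log (W t).det) :=
        Finset.sum_le_sum fun t _ => hstep t ▸ Real.min_one_le_two_mul_log_one_add
          ((hWpd t).dotProduct_inv_mulVec_self_nonneg (X t))
    _ = 2 * (Real.log (W n).det - Real.log V.det) := by
        rw [← Finset.mul_sum, Finset.sum_range_sub (fun t => Real.log (W t).det), hW 0,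
          Finset.sum_range_zero, add_zero]
end

section
/- Let d ≥ 1, λ > 0, L ≥ 0, and let T, m be natural numbers with m ≤ T. Let V be a d×d positive definite real matrix such that V − λI is positive semidefinite, and let x_1, …, x_m ∈ ℝ^d satisfy ‖x_s‖₂ ≤ L for all s. Then det(Σ_{s=1}^m x_s x_sᵀ + V)/det(V) − 1 ≤ min{(1 + L²/λ)^T, (1 + T·L²/(λd))^d}. -/
open Matrix

theorem row_mul_mul_col' {d : ℕ} (B : Matrix (Fin d) (Fin d) ℝ) (x y : Fin d → ℝ) :
    (replicateRow Unit x * B * replicateCol Unit y) default default = x ⬝ᵥ (B *ᵥ y) := by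
  simp only [Matrix.mul_apply, dotProduct, mulVec, replicateRow_apply, replicateCol_apply, Finset.sum_mul,
    Finset.mul_sum]
  rw [Finset.sum_comm]
  apply Finset.sum_congr rfl; intros; apply Finset.sum_congr rfl; intros; ring

theorem trace_mul_vecMulVec' {d : ℕ} (B : Matrix (Fin d) (Fin d) ℝ) (x : Fin d → ℝ) :
    (B * vecMulVec x x).trace = x ⬝ᵥ (B *ᵥ x) := by
  rw [vecMulVec_eq Unit, ← Matrix.mul_assoc, trace_mul_cycle]
  rw [show (replicateRow Unit x * B * replicateCol Unit x).trace
      = (replicateRow Unit x * B * replicateCol Unit x) default default from Fintype.sum_unique _]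
  exact row_mul_mul_col' B x x

theorem posSemidef_vecMulVec' {d : ℕ} (x : Fin d → ℝ) : (vecMulVec x x).PosSemidef := by
  have h := posSemidef_conjTranspose_mul_self (replicateRow Unit x)
  rwa [conjTranspose_replicateRow, star_trivial, ← vecMulVec_eq Unit] at h

theorem det_add_vecMulVec' {d : ℕ} (A : Matrix (Fin d) (Fin d) ℝ) (hA : IsUnit A.det)
    (x : Fin d → ℝ) :
    (A + vecMulVec x x).det = A.det * (1 + x ⬝ᵥ A⁻¹ *ᵥ x) := by
  rw [vecMulVec_eq Unit, det_add_replicateCol_mul_replicateRow hA]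
  congr 1
  rw [det_unique, Matrix.add_apply, Matrix.one_apply_eq, row_mul_mul_col']

theorem quad_bound' {d : ℕ} {lam : ℝ} (hlam : 0 < lam) {A : Matrix (Fin d) (Fin d) ℝ}
    (hA : A.PosDef) (hAl : (A - lam • (1 : Matrix (Fin d) (Fin d) ℝ)).PosSemidef)
    (x : Fin d → ℝ) :
    0 ≤ x ⬝ᵥ A⁻¹ *ᵥ x ∧ x ⬝ᵥ A⁻¹ *ᵥ x ≤ (x ⬝ᵥ x) / lam := by
  have hAinv : A⁻¹.PosDef := hA.inv
  have h0 : 0 ≤ x ⬝ᵥ A⁻¹ *ᵥ x := by simpa using hAinv.posSemidef.dotProduct_mulVec_nonneg x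
  refine ⟨h0, ?_⟩
  set y := A⁻¹ *ᵥ x with hy
  have hAy : A *ᵥ y = x := by
    rw [hy, mulVec_mulVec, Matrix.mul_nonsing_inv _ (isUnit_iff_ne_zero.2 hA.det_pos.ne'),
      one_mulVec]
  have hquad : lam * (y ⬝ᵥ y) ≤ x ⬝ᵥ y := by
    have := hAl.dotProduct_mulVec_nonneg y
    simp only [star_trivial, sub_mulVec, dotProduct_sub, smul_mulVec, one_mulVec,
      dotProduct_smul, smul_eq_mul, sub_nonneg] at this
    calc lam * (y ⬝ᵥ y) ≤ y ⬝ᵥ A *ᵥ y := this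
    _ = x ⬝ᵥ y := by rw [hAy]; exact dotProduct_comm _ _
  have hcs : (x ⬝ᵥ y) ^ 2 ≤ (x ⬝ᵥ x) * (y ⬝ᵥ y) := by
    simpa [dotProduct, sq] using Finset.sum_mul_sq_le_sq_mul_sq Finset.univ x y
  have hxx : 0 ≤ x ⬝ᵥ x := Finset.sum_nonneg fun i _ => mul_self_nonneg (x i)
  have hyy : 0 ≤ y ⬝ᵥ y := Finset.sum_nonneg fun i _ => mul_self_nonneg (y i)
  rw [le_div_iff₀ hlam]
  nlinarith [mul_le_mul_of_nonneg_left hcs hlam.le, mul_le_mul_of_nonneg_left hquad hxx, h0, hyy]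

theorem amgm_prod_le' {d : ℕ} (hd : 1 ≤ d) (f : Fin d → ℝ) (hf : ∀ i, 0 ≤ f i) :
    ∏ i, f i ≤ ((∑ i, f i) / d) ^ d := by
  have hd0 : (0:ℝ) < d := by exact_mod_cast hd
  have key := Real.geom_mean_le_arith_mean_weighted Finset.univ (fun _ => 1 / (d:ℝ)) f
    (fun i _ => by positivity)
    (by simp [Finset.card_univ]; field_simp)
    (fun i _ => hf i)
  have hL : (∏ i, f i ^ (1 / (d:ℝ))) ^ d = ∏ i, f i := by
    rw [← Finset.prod_pow]
    apply Finset.prod_congr rfl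
    intro i _
    rw [← Real.rpow_natCast (f i ^ (1/(d:ℝ))), ← Real.rpow_mul (hf i)]
    rw [one_div, inv_mul_cancel₀ hd0.ne', Real.rpow_one]
  have hR : ∑ i, (1 / (d:ℝ)) * f i = (∑ i, f i) / d := by
    rw [← Finset.mul_sum]; ring
  calc ∏ i, f i = (∏ i, f i ^ (1 / (d:ℝ))) ^ d := hL.symm
  _ ≤ ((∑ i, f i) / d) ^ d := by
      apply pow_le_pow_left₀ (Finset.prod_nonneg fun i _ => Real.rpow_nonneg (hf i) _)
      rw [← hR]; exact key

theorem trace_eq_sum_eigs' {d : ℕ} {A : Matrix (Fin d) (Fin d) ℝ} (hA : A.IsHermitian) :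
    A.trace = ∑ i, hA.eigenvalues i := by
  simpa using hA.trace_eq_sum_eigenvalues

/-- Upper bound on the data incentive: if `V ⪰ λI` is positive definite,
`‖x_s‖₂ ≤ L` for all `s`, and `m ≤ T`, then
`det(∑_{s} x_s x_sᵀ + V)/det V − 1 ≤ min {(1 + L²/λ)^T, (1 + T L²/(λd))^d}`. -/
theorem data_incentive_le {d : ℕ} (hd : 1 ≤ d) (lam L : ℝ) (hlam : 0 < lam)
    (hL : 0 ≤ L) (T m : ℕ) (hmT : m ≤ T)
    (V : Matrix (Fin d) (Fin d) ℝ) (hV : V.PosDef)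
    (hVlam : (V - lam • (1 : Matrix (Fin d) (Fin d) ℝ)).PosSemidef)
    (x : ℕ → (Fin d → ℝ))
    (hx : ∀ s ∈ Finset.range m, Real.sqrt (x s ⬝ᵥ x s) ≤ L) :
    ((∑ s ∈ Finset.range m, vecMulVec (x s) (x s)) + V).det / V.det - 1 ≤
      min ((1 + L ^ 2 / lam) ^ T) ((1 + T * L ^ 2 / (lam * d)) ^ d) := by
  classical
  have hdpos : (0:ℝ) < d := by exact_mod_cast hd
  have hVdet : (0:ℝ) < V.det := hV.det_pos
  -- norm bound in squared form
  have hXnorm : ∀ s ∈ Finset.range m, x s ⬝ᵥ x s ≤ L ^ 2 := by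
    intro s hs
    have h0 : 0 ≤ x s ⬝ᵥ x s := Finset.sum_nonneg fun i _ => mul_self_nonneg _
    have h := hx s hs
    nlinarith [Real.sq_sqrt h0, Real.sqrt_nonneg (x s ⬝ᵥ x s)]
  -- partial sums are PSD
  have hSum : ∀ k : ℕ, (∑ s ∈ Finset.range k, vecMulVec (x s) (x s)).PosSemidef := by
    intro k
    induction k with
    | zero => simpa using (Matrix.PosSemidef.zero : (0 : Matrix (Fin d) (Fin d) ℝ).PosSemidef)
    | succ k ih =>
      rw [Finset.sum_range_succ]
      exact ih.add (posSemidef_vecMulVec' _)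
  set W : ℕ → Matrix (Fin d) (Fin d) ℝ :=
    fun k => (∑ s ∈ Finset.range k, vecMulVec (x s) (x s)) + V with hW
  have hWpd : ∀ k, (W k).PosDef := fun k => Matrix.PosDef.posSemidef_add (hSum k) hV
  have hWlam : ∀ k, (W k - lam • (1 : Matrix (Fin d) (Fin d) ℝ)).PosSemidef := by
    intro k
    have : W k - lam • (1 : Matrix (Fin d) (Fin d) ℝ)
        = (∑ s ∈ Finset.range k, vecMulVec (x s) (x s))
          + (V - lam • (1 : Matrix (Fin d) (Fin d) ℝ)) := by
      rw [hW]; exact add_sub_assoc _ _ _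
    rw [this]
    exact (hSum k).add hVlam
  have hbase : (0:ℝ) ≤ L ^ 2 / lam := by positivity
  -- telescoping bound
  have htel : ∀ k, k ≤ m → (W k).det ≤ V.det * (1 + L ^ 2 / lam) ^ k := by
    intro k
    induction k with
    | zero => intro _; simp [hW]
    | succ k ih =>
      intro hk
      have hk' : k ≤ m := Nat.le_of_succ_le hk
      have hkm : k < m := hk
      have hstep : (W (k+1)).det = (W k).det * (1 + x k ⬝ᵥ (W k)⁻¹ *ᵥ x k) := by
        have hWk1 : W (k+1) = W k + vecMulVec (x k) (x k) := by
          rw [hW]; simp only [Finset.sum_range_succ]; abel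
        rw [hWk1, det_add_vecMulVec' _ (isUnit_iff_ne_zero.2 (hWpd k).det_pos.ne') _]
      have hq := quad_bound' hlam (hWpd k) (hWlam k) (x k)
      have hxk : x k ⬝ᵥ x k ≤ L ^ 2 := hXnorm k (Finset.mem_range.2 hkm)
      have hfac : 1 + x k ⬝ᵥ (W k)⁻¹ *ᵥ x k ≤ 1 + L ^ 2 / lam := by
        have : x k ⬝ᵥ (W k)⁻¹ *ᵥ x k ≤ L ^ 2 / lam :=
          hq.2.trans (by gcongr)
        linarith
      calc (W (k+1)).det = (W k).det * (1 + x k ⬝ᵥ (W k)⁻¹ *ᵥ x k) := hstep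
      _ ≤ (V.det * (1 + L ^ 2 / lam) ^ k) * (1 + L ^ 2 / lam) := by
          apply mul_le_mul (ih hk') hfac (by linarith [hq.1]) (by positivity)
      _ = V.det * (1 + L ^ 2 / lam) ^ (k+1) := by ring
  -- bound 1
  have hbound1 : (W m).det / V.det ≤ (1 + L ^ 2 / lam) ^ T := by
    rw [div_le_iff₀ hVdet]
    calc (W m).det ≤ V.det * (1 + L ^ 2 / lam) ^ m := htel m le_rfl
    _ ≤ V.det * (1 + L ^ 2 / lam) ^ T := by
        apply mul_le_mul_of_nonneg_left _ hVdet.le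
        exact pow_le_pow_right₀ (by linarith) hmT
    _ = (1 + L ^ 2 / lam) ^ T * V.det := by ring
  -- bound 2 via eigenvalues and AM-GM
  have hVinv : V⁻¹.PosDef := hV.inv
  open scoped MatrixOrder in
  set S : Matrix (Fin d) (Fin d) ℝ := CFC.sqrt V⁻¹ with hSdef
  open scoped MatrixOrder in
  have hS : S.PosSemidef := (CFC.sqrt_nonneg _).posSemidef
  open scoped MatrixOrder in
  have hSS : S * S = V⁻¹ := CFC.sqrt_mul_sqrt_self _ hVinv.posSemidef.nonneg
  have hDV : (W m).PosSemidef := (hWpd m).posSemidef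
  set N : Matrix (Fin d) (Fin d) ℝ := S * W m * S with hNdef
  have hN : N.PosSemidef := by
    have h := hDV.mul_mul_conjTranspose_same S
    rwa [hS.1.eq] at h
  have hdetN : N.det = (W m).det / V.det := by
    have hVdet' : V.det ≠ 0 := hVdet.ne'
    have h2 : S.det * S.det = (V.det)⁻¹ := by
      rw [← det_mul, hSS, det_nonsing_inv, Ring.inverse_eq_inv']
    rw [hNdef, det_mul, det_mul,
      show S.det * (W m).det * S.det = S.det * S.det * (W m).det from by ring, h2,
      inv_mul_eq_div]
  have hquadV : ∀ s ∈ Finset.range m,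
      0 ≤ x s ⬝ᵥ V⁻¹ *ᵥ x s ∧ x s ⬝ᵥ V⁻¹ *ᵥ x s ≤ L ^ 2 / lam := by
    intro s hs
    have hq := quad_bound' hlam hV hVlam (x s)
    exact ⟨hq.1, hq.2.trans (by gcongr; exact hXnorm s hs)⟩
  have htrN : N.trace = d + ∑ s ∈ Finset.range m, x s ⬝ᵥ V⁻¹ *ᵥ x s := by
    rw [hNdef, trace_mul_cycle, hSS, hW]
    simp only [Matrix.mul_add, trace_add, Finset.mul_sum, trace_sum, trace_mul_vecMulVec']
    rw [Matrix.nonsing_inv_mul V (isUnit_iff_ne_zero.2 hVdet.ne'), trace_one, Fintype.card_fin,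
      add_comm]
  have htrBound : N.trace ≤ d + T * L ^ 2 / lam := by
    rw [htrN]
    have h1 : ∑ s ∈ Finset.range m, x s ⬝ᵥ V⁻¹ *ᵥ x s ≤ ∑ s ∈ Finset.range m, L ^ 2 / lam :=
      Finset.sum_le_sum fun s hs => (hquadV s hs).2
    have h2 : (m : ℝ) * (L ^ 2 / lam) ≤ (T : ℝ) * (L ^ 2 / lam) :=
      mul_le_mul_of_nonneg_right (by exact_mod_cast hmT) hbase
    rw [Finset.sum_const, Finset.card_range, nsmul_eq_mul] at h1
    have h3 := h1.trans h2
    have h4 : (T:ℝ) * L ^ 2 / lam = (T:ℝ) * (L ^ 2 / lam) := by ring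
    linarith [h3]
  have htrNonneg : (0:ℝ) ≤ N.trace := by
    rw [htrN]
    have : 0 ≤ ∑ s ∈ Finset.range m, x s ⬝ᵥ V⁻¹ *ᵥ x s :=
      Finset.sum_nonneg fun s hs => (hquadV s hs).1
    positivity
  have hbound2 : (W m).det / V.det ≤ (1 + T * L ^ 2 / (lam * d)) ^ d := by
    have heig : N.det = ∏ i, hN.1.eigenvalues i := by
      have := hN.1.det_eq_prod_eigenvalues
      simpa using this
    have htr : N.trace = ∑ i, hN.1.eigenvalues i := trace_eq_sum_eigs' hN.1
    calc (W m).det / V.det = N.det := hdetN.symm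
    _ = ∏ i, hN.1.eigenvalues i := heig
    _ ≤ ((∑ i, hN.1.eigenvalues i) / d) ^ d :=
        amgm_prod_le' hd _ (fun i => hN.eigenvalues_nonneg i)
    _ = (N.trace / d) ^ d := by rw [htr]
    _ ≤ (1 + T * L ^ 2 / (lam * d)) ^ d := by
        apply pow_le_pow_left₀ (by positivity)
        rw [div_le_iff₀ hdpos]
        have : 1 + (T:ℝ) * L ^ 2 / (lam * d) = (d + T * L ^ 2 / lam) / d := by
          field_simp
        rw [this, div_mul_cancel₀ _ hdpos.ne']
        exact htrBound
  have hkey : (W m).det / V.det ≤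
      min ((1 + L ^ 2 / lam) ^ T) ((1 + T * L ^ 2 / (lam * d)) ^ d) :=
    le_min hbound1 hbound2
  calc ((∑ s ∈ Finset.range m, vecMulVec (x s) (x s)) + V).det / V.det - 1
      ≤ (W m).det / V.det := by rw [hW]; linarith
  _ ≤ _ := hkey
end
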